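/- Let ρ and σ be density matrices on a finite-dimensional Hilbert space and let {E_j} be a POVM (positive operators summing to the identity). Then F(ρ,σ) ≤ (Σ_j √(Tr(ρ E_j) Tr(σ E_j)))², where F(ρ,σ) = (Tr √(σ^{1/2} ρ σ^{1/2}))². -/

import Mathlib

open Matrix Kronecker Finset ComplexOrder

noncomputable section
namespace QAE

/-- Partial trace over the second tensor factor. -/
def ptraceB {A B : Type*} [Fintype B] (ρ : Matrix (A × B) (A × B) ℂ) : Matrix A A ℂ :=
  Matrix.of fun i j => ∑ k : B, ρ (i, k) (j, k)

/-- Partial trace over the first tensor factor. -/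
def ptraceA {A B : Type*} [Fintype A] (ρ : Matrix (A × B) (A × B) ℂ) : Matrix B B ℂ :=
  Matrix.of fun i j => ∑ k : A, ρ (k, i) (k, j)

/-- Outer product |v⟩⟨v|. -/
def outer {A : Type*} (v : A → ℂ) : Matrix A A ℂ := Matrix.vecMulVec v (star v)

/-- The positive semidefinite square root `U * diagonal (√λ) * Uᴴ`, as `Matrix.PosSemidef.sqrt`
was defined in the older Mathlib. -/
def psdSqrt {n : Type*} [Fintype n] [DecidableEq n] {A : Matrix n n ℂ} (hA : A.PosSemidef) :
    Matrix n n ℂ :=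
  (hA.1.eigenvectorUnitary : Matrix n n ℂ) *
    diagonal ((↑) ∘ (Real.sqrt ·) ∘ hA.1.eigenvalues) * (star hA.1.eigenvectorUnitary : Matrix n n ℂ)

lemma psdSqrt_psd {n : Type*} [Fintype n] [DecidableEq n] {A : Matrix n n ℂ} (hA : A.PosSemidef) :
    (psdSqrt hA).PosSemidef := by
  unfold psdSqrt
  have hd : (diagonal ((↑) ∘ (Real.sqrt ·) ∘ hA.1.eigenvalues) : Matrix n n ℂ).PosSemidef := by
    refine PosSemidef.diagonal ?_
    intro i
    simp [Complex.zero_le_real, Real.sqrt_nonneg]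
  have := hd.mul_mul_conjTranspose_same (hA.1.eigenvectorUnitary : Matrix n n ℂ)
  simpa [star_eq_conjTranspose] using this

lemma sandwich_psd {n : Type*} [Fintype n] [DecidableEq n] {ρ σ : Matrix n n ℂ}
    (hρ : ρ.PosSemidef) (hσ : σ.PosSemidef) :
    (psdSqrt hσ * ρ * psdSqrt hσ).PosSemidef := by
  have h := hρ.mul_mul_conjTranspose_same (psdSqrt hσ)
  rwa [(psdSqrt_psd hσ).isHermitian.eq] at h

-- Squared Uhlmann fidelity F(ρ,σ) = (Tr √(σ^{1/2} ρ σ^{1/2}))².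
open Classical in
def sqFidelity {n : Type*} [Fintype n] [DecidableEq n] (ρ σ : Matrix n n ℂ) : ℝ :=
  if h : ρ.PosSemidef ∧ σ.PosSemidef then
    ((psdSqrt (sandwich_psd h.1 h.2)).trace).re ^ 2
  else 0

/-- A density matrix: positive semidefinite with unit trace. -/
def IsDensity {n : Type*} [Fintype n] [DecidableEq n] (ρ : Matrix n n ℂ) : Prop :=
  ρ.PosSemidef ∧ ρ.trace = 1

end QAE
end

/-!
Write `√ρ √σ = A`, so that `√F(ρ,σ) = Tr √(AᴴA)`. The weak polar decomposition `U = A (AᴴA)^{-1/2}`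
is a contraction with `Tr (Uᴴ A) = Tr √(AᴴA)`. Inserting `Σ_j E_j = 1` gives
`Tr (Uᴴ A) = Σ_j Tr (Uᴴ √ρ E_j √σ)`, and Cauchy–Schwarz for the Hilbert–Schmidt inner product,
with `E_j = √E_j √E_j` split between the two factors, bounds the `j`-th term by
`√(Tr (ρ E_j) Tr (σ E_j))`.
-/

open scoped MatrixOrder

namespace Matrix

variable {m n 𝕜 : Type*} [Fintype m] [Fintype n] [RCLike 𝕜]

lemma PosSemidef.re_trace_nonneg {A : Matrix n n 𝕜} (hA : A.PosSemidef) :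
    0 ≤ RCLike.re A.trace :=
  (RCLike.nonneg_iff.mp hA.trace_nonneg).1

theorem re_trace_conjTranspose_mul_le (X Y : Matrix m n 𝕜) :
    RCLike.re (Xᴴ * Y).trace ≤
      √(RCLike.re (Xᴴ * X).trace) * √(RCLike.re (Yᴴ * Y).trace) := by
  let flat : Matrix m n 𝕜 → EuclideanSpace 𝕜 (m × n) := fun P => WithLp.toLp 2 fun p => P p.1 p.2
  have inner_flat (P Q : Matrix m n 𝕜) : inner 𝕜 (flat P) (flat Q) = (Pᴴ * Q).trace := by
    simp only [flat, PiLp.inner_apply, RCLike.inner_apply, Fintype.sum_prod_type, trace, diag,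
      mul_apply, conjTranspose_apply]
    rw [Finset.sum_comm]
    simp only [mul_comm, RCLike.star_def]
  have norm_flat (P : Matrix m n 𝕜) : ‖flat P‖ = √(RCLike.re (Pᴴ * P).trace) := by
    rw [← inner_flat, inner_self_eq_norm_sq (𝕜 := 𝕜), Real.sqrt_sq (norm_nonneg _)]
  rw [← norm_flat, ← norm_flat, ← inner_flat]
  exact re_inner_le_norm _ _

lemma re_trace_mul_mul_conjTranspose_mono {X Y : Matrix n n 𝕜} (h : X ≤ Y) (B : Matrix m n 𝕜) :
    RCLike.re (B * X * Bᴴ).trace ≤ RCLike.re (B * Y * Bᴴ).trace := by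
  have hpos := (h.mul_mul_conjTranspose_same B).re_trace_nonneg
  rwa [Matrix.mul_sub, Matrix.sub_mul, trace_sub, map_sub, sub_nonneg] at hpos

variable [DecidableEq n]

lemma cfc_sqrt_mul_self {A : Matrix n n 𝕜} (hA : A.PosSemidef) :
    cfc Real.sqrt A * cfc Real.sqrt A = A := by
  rw [← cfc_mul ..]
  conv_rhs => rw [← cfc_id' ℝ A hA.1]
  exact cfc_congr fun x hx =>
    Real.mul_self_sqrt (spectrum_nonneg_of_nonneg (nonneg_iff_posSemidef.mpr hA) hx)

/-- The witness is `U = A (AᴴA)^{-1/2}`; as `(√0)⁻¹ = 0`, the inverse square root acts only on the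
support of `AᴴA`. -/
theorem exists_conjTranspose_mul_self_le_one_trace_eq (A : Matrix n n 𝕜) :
    ∃ U : Matrix n n 𝕜, Uᴴ * U ≤ 1 ∧ (Uᴴ * A).trace = (cfc Real.sqrt (Aᴴ * A)).trace := by
  have hM : IsSelfAdjoint (Aᴴ * A) := (posSemidef_conjTranspose_mul_self A).1
  have hcont (f : ℝ → ℝ) : ContinuousOn f (spectrum ℝ (Aᴴ * A)) :=
    finite_real_spectrum.continuousOn f
  set V := cfc (fun x : ℝ => (√x)⁻¹) (Aᴴ * A)
  have hV : Vᴴ = V := (cfc_predicate _ _ : IsSelfAdjoint V)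
  have hUU : (A * V)ᴴ * (A * V) = cfc (fun x : ℝ => (√x)⁻¹ * x * (√x)⁻¹) (Aᴴ * A) := by
    rw [cfc_mul _ _ _ (hcont _) (hcont _), cfc_mul _ _ _ (hcont _) (hcont _), cfc_id' ℝ _ hM,
      conjTranspose_mul, hV]
    simp only [V, Matrix.mul_assoc]
  refine ⟨A * V, ?_, ?_⟩
  · rw [hUU]
    refine cfc_le_one _ _ fun x _ => ?_
    rw [inv_mul_eq_div, Real.div_sqrt]
    exact mul_inv_le_one
  · rw [conjTranspose_mul, hV, Matrix.mul_assoc]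
    conv_lhs => rw [← cfc_id' ℝ (Aᴴ * A) hM, ← cfc_mul _ _ _ (hcont _) (hcont _)]
    simp only [inv_mul_eq_div, Real.div_sqrt]

theorem re_trace_contraction_mul_posSemidef_mul_le {U X Y E : Matrix n n 𝕜} (hU : Uᴴ * U ≤ 1)
    (hE : E.PosSemidef) :
    RCLike.re (Uᴴ * (X * E * Y)).trace ≤
      √(RCLike.re (Xᴴ * X * E).trace * RCLike.re (Y * Yᴴ * E).trace) := by
  set B := cfc Real.sqrt E
  have hB : Bᴴ = B := (cfc_predicate _ _ : IsSelfAdjoint B)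
  have hBB : B * B = E := cfc_sqrt_mul_self hE
  have hsplit : (Uᴴ * (X * E * Y)).trace = ((U * Yᴴ * B)ᴴ * (X * B)).trace := by
    rw [← hBB]
    simp only [conjTranspose_mul, hB, conjTranspose_conjTranspose, Matrix.mul_assoc]
    rw [trace_mul_comm B]
    simp only [Matrix.mul_assoc]
    rw [trace_mul_comm Y]
    simp only [Matrix.mul_assoc]
  have hX : ((X * B)ᴴ * (X * B)).trace = (Xᴴ * X * E).trace := by
    rw [← hBB, conjTranspose_mul, hB, ← trace_mul_cycle]
    simp only [Matrix.mul_assoc]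
  have hY : RCLike.re ((U * Yᴴ * B)ᴴ * (U * Yᴴ * B)).trace ≤ RCLike.re (Y * Yᴴ * E).trace := by
    have hmono := re_trace_mul_mul_conjTranspose_mono hU (B * Y)
    rw [← hBB]
    convert hmono using 2
    · simp only [conjTranspose_mul, conjTranspose_conjTranspose, hB, Matrix.mul_assoc]
    · rw [Matrix.mul_one, conjTranspose_mul, hB]
      simp only [Matrix.mul_assoc]
      rw [trace_mul_comm B]
      simp only [Matrix.mul_assoc]
  have hX0 : 0 ≤ RCLike.re (Xᴴ * X * E).trace := by
    rw [← hX]; exact (posSemidef_conjTranspose_mul_self _).re_trace_nonneg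
  calc RCLike.re (Uᴴ * (X * E * Y)).trace
      ≤ √(RCLike.re (Xᴴ * X * E).trace) * √(RCLike.re ((U * Yᴴ * B)ᴴ * (U * Yᴴ * B)).trace) := by
        rw [hsplit, ← hX, mul_comm (√_)]
        exact re_trace_conjTranspose_mul_le _ _
    _ ≤ √(RCLike.re (Xᴴ * X * E).trace) * √(RCLike.re (Y * Yᴴ * E).trace) := by gcongr
    _ = _ := (Real.sqrt_mul hX0 _).symm

end Matrix

namespace QAE

variable {n : Type*} [Fintype n] [DecidableEq n]

lemma psdSqrt_eq_cfc {A : Matrix n n ℂ} (hA : A.PosSemidef) : psdSqrt hA = cfc Real.sqrt A := by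
  rw [hA.1.cfc_eq, IsHermitian.cfc, Unitary.conjStarAlgAut_apply]
  rfl

lemma psdSqrt_mul_self {A : Matrix n n ℂ} (hA : A.PosSemidef) : psdSqrt hA * psdSqrt hA = A :=
  psdSqrt_eq_cfc hA ▸ cfc_sqrt_mul_self hA

end QAE

/-- fidelity is bounded by the measurement-induced fidelity of a POVM. -/
theorem stmt1 {n : Type*} [Fintype n] [DecidableEq n]
    (ρ σ : Matrix n n ℂ) (hρ : QAE.IsDensity ρ) (hσ : QAE.IsDensity σ)
    {m : ℕ} (E : Fin m → Matrix n n ℂ)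
    (hE : ∀ j, (E j).PosSemidef) (hsum : ∑ j, E j = 1) :
    QAE.sqFidelity ρ σ ≤
      (∑ j, Real.sqrt (((ρ * E j).trace).re * ((σ * E j).trace).re)) ^ 2 := by
  set R := QAE.psdSqrt hρ.1
  set S := QAE.psdSqrt hσ.1
  have hR : Rᴴ = R := (QAE.psdSqrt_psd hρ.1).1
  have hS : Sᴴ = S := (QAE.psdSqrt_psd hσ.1).1
  have hRR : R * R = ρ := QAE.psdSqrt_mul_self hρ.1
  have hSS : S * S = σ := QAE.psdSqrt_mul_self hσ.1
  obtain ⟨U, hU, htr⟩ := exists_conjTranspose_mul_self_le_one_trace_eq (R * S)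
  have hRS : (R * S)ᴴ * (R * S) = S * ρ * S := by
    rw [conjTranspose_mul, hR, hS, ← hRR]
    simp only [Matrix.mul_assoc]
  have hfid : QAE.sqFidelity ρ σ = (Uᴴ * (R * S)).trace.re ^ 2 := by
    rw [QAE.sqFidelity, dif_pos ⟨hρ.1, hσ.1⟩, htr, hRS, QAE.psdSqrt_eq_cfc]
  have hnonneg : 0 ≤ (Uᴴ * (R * S)).trace.re := by
    rw [htr, hRS, ← QAE.psdSqrt_eq_cfc (QAE.sandwich_psd hρ.1 hσ.1)]
    exact (QAE.psdSqrt_psd _).re_trace_nonneg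
  have hsplit : (Uᴴ * (R * S)).trace.re = ∑ j, (Uᴴ * (R * E j * S)).trace.re := by
    rw [← Complex.re_sum, ← trace_sum, ← Matrix.mul_sum, ← Finset.sum_mul, ← Matrix.mul_sum, hsum,
      Matrix.mul_one]
  have hterm (j : Fin m) :
      (Uᴴ * (R * E j * S)).trace.re ≤ √((ρ * E j).trace.re * (σ * E j).trace.re) := by
    simpa only [hR, hS, hRR, hSS, RCLike.re_to_complex] using
      re_trace_contraction_mul_posSemidef_mul_le (X := R) (Y := S) hU (hE j)
  rw [hfid]
  exact pow_le_pow_left₀ hnonneg (hsplit ▸ Finset.sum_le_sum fun j _ => hterm j) 2
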